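/- arXiv:1710.03942 — 2 statements merged into one kernel-verified Lean document; each statement's English description precedes it below -/
import Mathlib

section
/- Suppose the sampling set M satisfies the network compatibility condition with constants K > 0 and L > sqrt(p), the true signal x is clustered with respect to the partition F, and observations y[i] = x[i] + ε[i] for i in M. Then any minimizer x̂ of the nLasso objective sum_{i in M} ||x̃[i] - y[i]||_1 + (1/K)||x̃||_E satisfies ||x̂ - x||_E ≤ K (1 + 4 sqrt(p)/(L - sqrt(p))) * sum_{i in M} ||ε[i]||_1. -/
open Finset

noncomputable def TV {V : Type*} {p : ℕ} (W : V → V → ℝ) (S : Finset (V × V))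
    (x : V → EuclideanSpace ℝ (Fin p)) : ℝ :=
  ∑ e ∈ S, W e.1 e.2 * ‖x e.1 - x e.2‖

noncomputable def l1 {p : ℕ} (v : EuclideanSpace ℝ (Fin p)) : ℝ := ∑ k, |v k|

/-!
Write `z = x̂ - x` and split the edges into the interior edges `I` of the partition and the
boundary `∂F`. Comparing the objective at `x̂` with its value at the clustered signal `x`, on
which the interior TV vanishes, gives the basic inequality
`K ∑ ‖x̂ - y‖₁ + ‖z‖_I ≤ K ∑ ‖ε‖₁ + ‖z‖_∂F`. Since `z = (x̂ - y) + ε` on `M`, the NCC applied to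
`z` yields `(L/√p) ‖z‖_∂F ≤ 2K ∑ ‖ε‖₁ + ‖z‖_∂F`, so `‖z‖_∂F ≤ 2K√p/(L-√p) ∑ ‖ε‖₁` because
`L > √p`. Adding the interior part, `‖z‖_E ≤ K ∑ ‖ε‖₁ + 2‖z‖_∂F` is the claimed bound.
-/

section l1

variable {p : ℕ}

lemma l1_nonneg (v : EuclideanSpace ℝ (Fin p)) : 0 ≤ l1 v :=
  sum_nonneg fun _ _ => abs_nonneg _

lemma l1_neg (v : EuclideanSpace ℝ (Fin p)) : l1 (-v) = l1 v := by
  simp [l1]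

lemma l1_add_le (u v : EuclideanSpace ℝ (Fin p)) : l1 (u + v) ≤ l1 u + l1 v := by
  rw [l1, l1, l1, ← sum_add_distrib]
  exact sum_le_sum fun k _ => abs_add_le (u k) (v k)

lemma norm_le_l1 (v : EuclideanSpace ℝ (Fin p)) : ‖v‖ ≤ l1 v := by
  refine (abs_le_of_sq_le_sq' ?_ (l1_nonneg v)).2
  calc ‖v‖ ^ 2 = ∑ k, |v k| ^ 2 := by simp [EuclideanSpace.real_norm_sq_eq]
    _ ≤ l1 v ^ 2 := sum_sq_le_sq_sum_of_nonneg fun _ _ => abs_nonneg _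

end l1

section TV

variable {V : Type*} {p : ℕ} (W : V → V → ℝ) (S : Finset (V × V))

lemma TV_filter_add_TV_filter_not {ι : Type*} [DecidableEq ι] (σ : V → ι)
    (x : V → EuclideanSpace ℝ (Fin p)) :
    TV W (S.filter fun e => σ e.1 = σ e.2) x + TV W (S.filter fun e => σ e.1 ≠ σ e.2) x =
      TV W S x :=
  sum_filter_add_sum_filter_not S _ _

lemma TV_sub_le (hW : ∀ i j, 0 ≤ W i j) (u v : V → EuclideanSpace ℝ (Fin p)) :
    TV W S (u - v) ≤ TV W S u + TV W S v := by
  rw [TV, TV, TV, ← sum_add_distrib]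
  refine sum_le_sum fun e _ => ?_
  rw [← mul_add]
  refine mul_le_mul_of_nonneg_left ?_ (hW _ _)
  calc ‖(u - v) e.1 - (u - v) e.2‖ = ‖(u e.1 - u e.2) - (v e.1 - v e.2)‖ := by
        simp only [Pi.sub_apply, sub_sub_sub_comm]
    _ ≤ _ := norm_sub_le _ _

lemma TV_eq_zero_of_forall_eq {x : V → EuclideanSpace ℝ (Fin p)}
    (hx : ∀ e ∈ S, x e.1 = x e.2) : TV W S x = 0 :=
  sum_eq_zero fun e he => by rw [hx e he, sub_self, norm_zero, mul_zero]

lemma TV_sub_of_forall_eq (u : V → EuclideanSpace ℝ (Fin p)) {x : V → EuclideanSpace ℝ (Fin p)}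
    (hx : ∀ e ∈ S, x e.1 = x e.2) : TV W S (u - x) = TV W S u :=
  sum_congr rfl fun e he => by simp only [Pi.sub_apply, hx e he, sub_sub_sub_cancel_right]

lemma TV_of_fin_zero (x : V → EuclideanSpace ℝ (Fin 0)) : TV W S x = 0 :=
  sum_eq_zero fun e _ => by rw [Subsingleton.elim (x e.1 - x e.2) 0, norm_zero, mul_zero]

lemma TV_le_of_compatibility (z : V → EuclideanSpace ℝ (Fin p)) {L c : ℝ}
    (hL : Real.sqrt p < L) (h : L / Real.sqrt p * TV W S z ≤ c + TV W S z) :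
    TV W S z ≤ c * Real.sqrt p / (L - Real.sqrt p) := by
  rcases Nat.eq_zero_or_pos p with rfl | hp
  · simp [TV_of_fin_zero]
  have hs : 0 < Real.sqrt p := Real.sqrt_pos.2 (Nat.cast_pos.2 hp)
  rw [le_div_iff₀ (sub_pos.2 hL)]
  rw [div_mul_eq_mul_div, div_le_iff₀ hs] at h
  linarith

end TV

section nLasso

variable {V ι : Type*} [DecidableEq ι] {p : ℕ} (E : Finset (V × V)) (W : V → V → ℝ) (σ : V → ι)

lemma sum_norm_sub_le_sum_l1 {M : Finset V} {x x' y ε : V → EuclideanSpace ℝ (Fin p)}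
    (hy : ∀ i ∈ M, y i = x i + ε i) :
    ∑ i ∈ M, ‖(x' - x) i‖ ≤ ∑ i ∈ M, l1 (x' i - y i) + ∑ i ∈ M, l1 (ε i) := by
  rw [← sum_add_distrib]
  refine sum_le_sum fun i hi => ?_
  calc ‖(x' - x) i‖ ≤ l1 ((x' i - y i) + ε i) := by
        rw [hy i hi, sub_add_eq_sub_sub, sub_add_cancel]; exact norm_le_l1 _
    _ ≤ _ := l1_add_le _ _

lemma nLasso_basic_inequality (hW : ∀ i j, 0 ≤ W i j) {K : ℝ} (hK : 0 < K) {M : Finset V}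
    {x x' y ε : V → EuclideanSpace ℝ (Fin p)}
    (hx : ∀ e ∈ E.filter (fun e => σ e.1 = σ e.2), x e.1 = x e.2)
    (hy : ∀ i ∈ M, y i = x i + ε i)
    (hopt : ∑ i ∈ M, l1 (x' i - y i) + (1 / K) * TV W E x' ≤
      ∑ i ∈ M, l1 (x i - y i) + (1 / K) * TV W E x) :
    K * ∑ i ∈ M, l1 (x' i - y i) + TV W (E.filter fun e => σ e.1 = σ e.2) (x' - x) ≤
      K * ∑ i ∈ M, l1 (ε i) + TV W (E.filter fun e => σ e.1 ≠ σ e.2) (x' - x) := by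
  have hxy : ∑ i ∈ M, l1 (x i - y i) = ∑ i ∈ M, l1 (ε i) :=
    sum_congr rfl fun i hi => by rw [hy i hi, sub_add_cancel_left, l1_neg]
  have hx'_int := TV_sub_of_forall_eq W _ x' hx
  have hx_int := TV_eq_zero_of_forall_eq W _ hx
  have hbd := TV_sub_le W (E.filter fun e => σ e.1 ≠ σ e.2) hW x' (x' - x)
  rw [sub_sub_cancel] at hbd
  rw [← TV_filter_add_TV_filter_not W E σ x', ← TV_filter_add_TV_filter_not W E σ x, hxy] at hopt
  have h := mul_le_mul_of_nonneg_left hopt hK.le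
  simp only [mul_add, ← mul_assoc, mul_one_div_cancel hK.ne', one_mul] at h
  linarith

end nLasso

theorem stmt2_general {V ι : Type*} [DecidableEq ι] {p : ℕ}
    (E : Finset (V × V)) (W : V → V → ℝ) (hW : ∀ i j, 0 ≤ W i j)
    (M : Finset V) (σ : V → ι) (K L : ℝ) (hK : 0 < K) (hL : Real.sqrt p < L)
    (hNCC : ∀ z : V → EuclideanSpace ℝ (Fin p),
      (L / Real.sqrt p) * TV W (E.filter (fun e => σ e.1 ≠ σ e.2)) z ≤
        K * ∑ i ∈ M, ‖z i‖ + TV W (E.filter (fun e => σ e.1 = σ e.2)) z)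
    (a : ι → EuclideanSpace ℝ (Fin p)) (x : V → EuclideanSpace ℝ (Fin p))
    (hx : ∀ i, x i = a (σ i))
    (ε y : V → EuclideanSpace ℝ (Fin p)) (hy : ∀ i ∈ M, y i = x i + ε i)
    (xhat : V → EuclideanSpace ℝ (Fin p))
    (hmin : ∀ u : V → EuclideanSpace ℝ (Fin p),
      ∑ i ∈ M, l1 (xhat i - y i) + (1 / K) * TV W E xhat ≤
        ∑ i ∈ M, l1 (u i - y i) + (1 / K) * TV W E u) :
    TV W E (xhat - x) ≤
      K * (1 + 4 * Real.sqrt p / (L - Real.sqrt p)) * ∑ i ∈ M, l1 (ε i) := by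
  set z := xhat - x
  set D := ∑ i ∈ M, l1 (xhat i - y i)
  set η := ∑ i ∈ M, l1 (ε i)
  set s := Real.sqrt p
  have hcl : ∀ e ∈ E.filter (fun e => σ e.1 = σ e.2), x e.1 = x e.2 := fun e he => by
    rw [hx, hx, (mem_filter.1 he).2]
  have hbasic := nLasso_basic_inequality E W σ hW hK hcl hy (hmin x)
  have hres : ∑ i ∈ M, ‖z i‖ ≤ D + η := sum_norm_sub_le_sum_l1 hy
  have hB : TV W (E.filter fun e => σ e.1 ≠ σ e.2) z ≤ 2 * K * η * s / (L - s) :=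
    TV_le_of_compatibility W _ z hL <| by
      linarith [hNCC z, mul_le_mul_of_nonneg_left hres hK.le]
  have hD : 0 ≤ K * D := mul_nonneg hK.le (sum_nonneg fun _ _ => l1_nonneg _)
  have hLs : L - s ≠ 0 := (sub_pos.2 hL).ne'
  rw [← TV_filter_add_TV_filter_not W E σ z]
  calc _ ≤ K * η + 2 * TV W (E.filter fun e => σ e.1 ≠ σ e.2) z := by linarith
    _ ≤ K * η + 2 * (2 * K * η * s / (L - s)) := by gcongr
    _ = K * (1 + 4 * s / (L - s)) * η := by field_simp; ring

/-- nLasso recovery under the network compatibility condition. -/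
theorem stmt2 {V ι : Type*} [Fintype V] [DecidableEq V] [DecidableEq ι] {p : ℕ}
    (E : Finset (V × V)) (W : V → V → ℝ) (hW : ∀ i j, 0 ≤ W i j)
    (M : Finset V) (σ : V → ι) (K L : ℝ) (hK : 0 < K) (hL : Real.sqrt p < L)
    (hNCC : ∀ z : V → EuclideanSpace ℝ (Fin p),
      (L / Real.sqrt p) * TV W (E.filter (fun e => σ e.1 ≠ σ e.2)) z ≤
        K * ∑ i ∈ M, ‖z i‖ + TV W (E.filter (fun e => σ e.1 = σ e.2)) z)
    (a : ι → EuclideanSpace ℝ (Fin p)) (x : V → EuclideanSpace ℝ (Fin p))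
    (hx : ∀ i, x i = a (σ i))
    (ε y : V → EuclideanSpace ℝ (Fin p)) (hy : ∀ i ∈ M, y i = x i + ε i)
    (xhat : V → EuclideanSpace ℝ (Fin p))
    (hmin : ∀ u : V → EuclideanSpace ℝ (Fin p),
      ∑ i ∈ M, l1 (xhat i - y i) + (1 / K) * TV W E xhat ≤
        ∑ i ∈ M, l1 (u i - y i) + (1 / K) * TV W E u) :
    TV W E (xhat - x) ≤
      K * (1 + 4 * Real.sqrt p / (L - Real.sqrt p)) * ∑ i ∈ M, l1 (ε i) :=
  stmt2_general E W hW M σ K L hK hL hNCC a x hx ε y hy xhat hmin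
end

section
/- Let x̃ := x̂ - x be the estimation error, where x is clustered with respect to partition F (so ||x||_{E\∂F} = 0) and x̂ minimizes the nLasso objective with parameter λ. Then sum_{i in M} ||x̂[i]-y[i]||_1 + λ ||x̃||_{E\∂F} ≤ sum_{i in M} ||ε[i]||_1 + λ ||x̃||_{∂F}. -/
open Finset

/-- Error bound \eqref{equ_inequ_basic_2}: the nLasso error concentrates on the boundary. -/
theorem stmt4 {V ι : Type*} [Fintype V] [DecidableEq ι] {p : ℕ}
    (E : Finset (V × V)) (W : V → V → ℝ) (hW : ∀ i j, 0 ≤ W i j)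
    (M : Finset V) (σ : V → ι) (lam : ℝ) (hlam : 0 ≤ lam)
    (a : ι → EuclideanSpace ℝ (Fin p)) (x : V → EuclideanSpace ℝ (Fin p))
    (hx : ∀ i, x i = a (σ i))
    (ε y : V → EuclideanSpace ℝ (Fin p)) (hy : ∀ i ∈ M, y i = x i + ε i)
    (xhat : V → EuclideanSpace ℝ (Fin p))
    (hmin : ∀ u : V → EuclideanSpace ℝ (Fin p),
      ∑ i ∈ M, l1 (xhat i - y i) + lam * TV W E xhat ≤
        ∑ i ∈ M, l1 (u i - y i) + lam * TV W E u) :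
    ∑ i ∈ M, l1 (xhat i - y i)
      + lam * TV W (E.filter (fun e => σ e.1 = σ e.2)) (xhat - x) ≤
    ∑ i ∈ M, l1 (ε i)
      + lam * TV W (E.filter (fun e => σ e.1 ≠ σ e.2)) (xhat - x) := by
  classical
  have hminx := hmin x
  -- data terms for u = x equal noise terms
  have h1 : ∑ i ∈ M, l1 (x i - y i) = ∑ i ∈ M, l1 (ε i) := by
    refine Finset.sum_congr rfl fun i hi => ?_
    rw [hy i hi]
    have : x i - (x i + ε i) = -(ε i) := by abel
    rw [this]
    simp [l1]
  -- split TV over E into equal-label and different-label edges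
  have hsplit : ∀ f : V → EuclideanSpace ℝ (Fin p),
      TV W E f = TV W (E.filter (fun e => σ e.1 = σ e.2)) f
        + TV W (E.filter (fun e => σ e.1 ≠ σ e.2)) f := by
    intro f
    unfold TV
    exact (Finset.sum_filter_add_sum_filter_not E _ _).symm
  -- on equal-label edges, x is constant
  have hxeq : ∀ e ∈ E.filter (fun e => σ e.1 = σ e.2), x e.1 = x e.2 := by
    intro e he
    have := (Finset.mem_filter.mp he).2
    rw [hx, hx, this]
  have h2 : TV W (E.filter (fun e => σ e.1 = σ e.2)) xhat
      = TV W (E.filter (fun e => σ e.1 = σ e.2)) (xhat - x) := by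
    unfold TV
    refine Finset.sum_congr rfl fun e he => ?_
    have hxe := hxeq e he
    have : xhat e.1 - xhat e.2
        = (xhat - x) e.1 - (xhat - x) e.2 := by
      simp only [Pi.sub_apply]
      rw [hxe]; abel
    rw [this]
  have h3 : TV W (E.filter (fun e => σ e.1 = σ e.2)) x = 0 := by
    unfold TV
    refine Finset.sum_eq_zero fun e he => ?_
    rw [hxeq e he]
    simp
  -- triangle inequality on different-label edges
  have h4 : TV W (E.filter (fun e => σ e.1 ≠ σ e.2)) x
      ≤ TV W (E.filter (fun e => σ e.1 ≠ σ e.2)) (xhat - x)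
        + TV W (E.filter (fun e => σ e.1 ≠ σ e.2)) xhat := by
    unfold TV
    rw [← Finset.sum_add_distrib]
    refine Finset.sum_le_sum fun e he => ?_
    rw [← mul_add]
    refine mul_le_mul_of_nonneg_left ?_ (hW e.1 e.2)
    have key : x e.1 - x e.2
        = -((xhat - x) e.1 - (xhat - x) e.2) + (xhat e.1 - xhat e.2) := by
      simp only [Pi.sub_apply]; abel
    calc ‖x e.1 - x e.2‖
        ≤ ‖-((xhat - x) e.1 - (xhat - x) e.2)‖ + ‖xhat e.1 - xhat e.2‖ := by
          rw [key]; exact norm_add_le _ _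
      _ = ‖(xhat - x) e.1 - (xhat - x) e.2‖ + ‖xhat e.1 - xhat e.2‖ := by
          rw [norm_neg]
  rw [hsplit xhat, hsplit x, h1, h2, h3] at hminx
  have hmul := mul_le_mul_of_nonneg_left h4 hlam
  nlinarith [hmul, hminx]
end
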